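/- For every positive integer N and every t ∈ [1/(N+2), 1/(N+1)], the N-th iterate of g₂ satisfies g₂^[N](t) = ((N+3)·t − 1) / ((N+4)·t − 1). -/

import Mathlib

/-!
In the coordinate `s = 1 / t` the branch `t / (1 - t)` of `g₂` is the translation `s ↦ s - 1`.
Hence for `t ∈ [1/(N+2), 1/(N+1)]` the first `N - 1` iterates stay in `(0, 1/3]` and equal
`t / (1 - (N - 1) t)`, which lands in `[1/3, 1/2]`; the last iterate applies the middle branch
`(4u - 1) / (5u - 1)`, and composing the two fractional linear maps gives the formula.
-/

/-- The element `g₂` of the Lodha–Moore group as a piecewise fractional linear map. -/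
noncomputable def g₂ (t : ℝ) : ℝ :=
  if t ≤ 0 then t
  else if t ≤ 1 / 3 then t / (1 - t)
  else if t ≤ 1 / 2 then (4 * t - 1) / (5 * t - 1)
  else if t ≤ 1 then 1 / (2 - t)
  else t

lemma g₂_of_pos_of_le_third {t : ℝ} (ht₀ : 0 < t) (ht : t ≤ 1 / 3) : g₂ t = t / (1 - t) := by
  rw [g₂, if_neg ht₀.not_ge, if_pos ht]

lemma g₂_of_third_le_of_le_half {t : ℝ} (ht₁ : 1 / 3 ≤ t) (ht₂ : t ≤ 1 / 2) :
    g₂ t = (4 * t - 1) / (5 * t - 1) := by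
  rcases ht₁.eq_or_lt with rfl | ht₁
  · norm_num [g₂]
  · rw [g₂, if_neg (by linarith), if_neg ht₁.not_ge, if_pos ht₂]

lemma g₂_iterate_of_pos_of_mul_le_one (n : ℕ) {t : ℝ} (ht₀ : 0 < t) (ht : (n + 2) * t ≤ 1) :
    g₂^[n] t = t / (1 - n * t) := by
  induction n generalizing t with
  | zero => simp
  | succ n ih =>
    push_cast at ht
    have h₁ : 0 < 1 - t := by nlinarith
    have hg : g₂ t = t / (1 - t) := g₂_of_pos_of_le_third ht₀ (by nlinarith)
    have hnext : (n + 2) * (t / (1 - t)) ≤ 1 := by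
      rw [mul_div_assoc', div_le_one h₁]; linarith
    rw [Function.iterate_succ_apply, hg, ih (div_pos ht₀ h₁) hnext]
    push_cast
    field_simp
    ring

/-- Formula for the `N`-th iterate of `g₂` on `[1/(N+2), 1/(N+1)]`. -/
theorem g₂_iterate_formula₂ (N : ℕ) (hN : 0 < N) (t : ℝ)
    (ht : t ∈ Set.Icc (1 / ((N : ℝ) + 2)) (1 / ((N : ℝ) + 1))) :
    g₂^[N] t = (((N : ℝ) + 3) * t - 1) / (((N : ℝ) + 4) * t - 1) := by
  obtain ⟨n, rfl⟩ := Nat.exists_eq_add_one_of_ne_zero hN.ne'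
  obtain ⟨hlo, hhi⟩ := ht
  push_cast at hlo hhi ⊢
  rw [div_le_iff₀ (by positivity)] at hlo
  rw [le_div_iff₀ (by positivity)] at hhi
  have ht₀ : 0 < t := by nlinarith
  have hden : 0 < 1 - n * t := by nlinarith
  have hu₁ : 1 / 3 ≤ t / (1 - n * t) := by
    rw [div_le_div_iff₀ (by norm_num) hden]; linarith
  have hu₂ : t / (1 - n * t) ≤ 1 / 2 := by
    rw [div_le_div_iff₀ hden (by norm_num)]; linarith
  rw [Function.iterate_succ_apply', g₂_iterate_of_pos_of_mul_le_one n ht₀ (by linarith),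
    g₂_of_third_le_of_le_half hu₁ hu₂, mul_div_assoc', div_sub_one hden.ne', mul_div_assoc',
    div_sub_one hden.ne', div_div_div_cancel_right₀ hden.ne']
  congr 1 <;> ring
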